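/- For all real numbers y₁, y₂: (i) E(−1/2) = −(27/64)·(y₁² + y₂² + 2), which is strictly negative; and (ii) for every real t ≠ −1/2, (2t + 1)⁶ · E((t + 2)/(−2t − 1)) = −27 · E(t). In particular, the Möbius involution σ(t) = (t+2)/(−2t−1) maps the set of real roots of E to itself. -/

import Mathlib

/-- The polynomial `E(t)` as a real-valued function. -/
def EFun (y₁ y₂ t : ℝ) : ℝ :=
  y₁^2 * (t^2 + 4*t + 1)^3 + y₂^2 * (t^2 - 2*t - 2)^3
    + 2*t^6 + 6*t^5 - 15*t^4 - 40*t^3 - 15*t^2 + 6*t + 2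

/-!
With `A = t² + 4t + 1` and `B = t² − 2t − 2` one has `E = y₁²A³ + y₂²B³ + AB(A + B)`,
a binary cubic form in `(A, B)`. Both quadratics transform under `σ` with the same
factor, `(2t+1)²·A(σ t) = −3·A(t)` and `(2t+1)²·B(σ t) = −3·B(t)`, so homogeneity of the
cubic form gives `(2t+1)⁶·E(σ t) = (−3)³·E(t)`. The pole `t = −1/2` of `σ` is never a
root because `E(−1/2) < 0`, hence `σ` maps roots to roots.
-/

namespace EFun

section Quadratics

variable {R : Type*} [CommRing R]

def quadA (t : R) : R := t^2 + 4*t + 1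

def quadB (t : R) : R := t^2 - 2*t - 2

def cubicForm (y₁ y₂ a b : R) : R := y₁^2 * a^3 + y₂^2 * b^3 + a * b * (a + b)

theorem cubicForm_mul (y₁ y₂ c a b : R) :
    cubicForm y₁ y₂ (c * a) (c * b) = c^3 * cubicForm y₁ y₂ a b := by
  unfold cubicForm; ring

variable {s t : R}

theorem quadA_of_mul_eq (h : s * (-2*t - 1) = t + 2) :
    (2*t + 1)^2 * quadA s = -3 * quadA t := by
  unfold quadA
  linear_combination (-(2*t + 1)*s + (t + 2) - 4*(2*t + 1)) * h

theorem quadB_of_mul_eq (h : s * (-2*t - 1) = t + 2) :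
    (2*t + 1)^2 * quadB s = -3 * quadB t := by
  unfold quadB
  linear_combination (-(2*t + 1)*s + (t + 2) + 2*(2*t + 1)) * h

end Quadratics

variable (y₁ y₂ : ℝ)

theorem eq_cubicForm (t : ℝ) : EFun y₁ y₂ t = cubicForm y₁ y₂ (quadA t) (quadB t) := by
  unfold EFun cubicForm quadA quadB; ring

theorem neg_half_eq : EFun y₁ y₂ (-1/2) = -(27/64) * (y₁^2 + y₂^2 + 2) := by
  unfold EFun; ring

theorem neg_half_neg : EFun y₁ y₂ (-1/2) < 0 := by
  rw [neg_half_eq]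
  exact mul_neg_of_neg_of_pos (by norm_num) (by positivity)

theorem mul_eq_of_mul_eq {s t : ℝ} (h : s * (-2*t - 1) = t + 2) :
    (2*t + 1)^6 * EFun y₁ y₂ s = -27 * EFun y₁ y₂ t := by
  rw [eq_cubicForm, eq_cubicForm]
  calc (2*t + 1)^6 * cubicForm y₁ y₂ (quadA s) (quadB s)
      = cubicForm y₁ y₂ ((2*t + 1)^2 * quadA s) ((2*t + 1)^2 * quadB s) := by
          rw [cubicForm_mul]; ring
    _ = cubicForm y₁ y₂ (-3 * quadA t) (-3 * quadB t) := by
          rw [quadA_of_mul_eq h, quadB_of_mul_eq h]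
    _ = -27 * cubicForm y₁ y₂ (quadA t) (quadB t) := by rw [cubicForm_mul]; norm_num

theorem mul_comp_involution {t : ℝ} (ht : t ≠ -1/2) :
    (2*t + 1)^6 * EFun y₁ y₂ ((t + 2) / (-2*t - 1)) = -27 * EFun y₁ y₂ t :=
  mul_eq_of_mul_eq y₁ y₂ (div_mul_cancel₀ _ fun h => ht (by linarith))

theorem eq_zero_comp_involution {t : ℝ} (h : EFun y₁ y₂ t = 0) :
    EFun y₁ y₂ ((t + 2) / (-2*t - 1)) = 0 := by
  have ht : t ≠ -1/2 := by
    rintro rfl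
    exact (neg_half_neg y₁ y₂).ne h
  have hpow : (2*t + 1)^6 ≠ 0 := pow_ne_zero _ (fun h' => ht (by linarith))
  have key := mul_comp_involution y₁ y₂ ht
  rw [h, mul_zero] at key
  exact (mul_eq_zero.mp key).resolve_left hpow

end EFun

theorem stmt_12 (y₁ y₂ : ℝ) :
    (EFun y₁ y₂ (-1/2) = -(27/64) * (y₁^2 + y₂^2 + 2)) ∧
    (EFun y₁ y₂ (-1/2) < 0) ∧
    (∀ t : ℝ, t ≠ -1/2 →
      (2*t + 1)^6 * EFun y₁ y₂ ((t + 2) / (-2*t - 1)) = -27 * EFun y₁ y₂ t) ∧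
    (∀ t : ℝ, EFun y₁ y₂ t = 0 → EFun y₁ y₂ ((t + 2) / (-2*t - 1)) = 0) :=
  ⟨EFun.neg_half_eq y₁ y₂, EFun.neg_half_neg y₁ y₂,
    fun _ ht => EFun.mul_comp_involution y₁ y₂ ht,
    fun _ h => EFun.eq_zero_comp_involution y₁ y₂ h⟩
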